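/- If μ is a compactly supported probability measure with support in [0, λ*], then for λ > λ*, the function φ(λ) = √λ · ∫ 1/(t − λ) dμ(t) is concave on (λ*, ∞). -/

import Mathlib

open MeasureTheory Set

/-!
Partial fractions in `√l` give `√l * (t - l)⁻¹ = -((√l - √t)⁻¹ + (√l + √t)⁻¹) / 2` for
`l > t ≥ 0`. Both `√l - √t` and `√l + √t` are concave and positive in `l`, so their reciprocals are
convex; hence the integrand is concave in `l` for every `t ∈ [0, λ*]`, and integrating against `μ`
preserves concavity.
-/

lemma ConcaveOn.convexOn_inv {𝕜 E : Type*} [Field 𝕜] [LinearOrder 𝕜] [IsStrictOrderedRing 𝕜]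
    [AddCommMonoid E] [Module 𝕜 E] {s : Set E} {f : E → 𝕜} (hf : ConcaveOn 𝕜 s f)
    (hpos : ∀ x ∈ s, 0 < f x) : ConvexOn 𝕜 s fun x => (f x)⁻¹ := by
  refine ⟨hf.1, fun x hx y hy a b ha hb hab => ?_⟩
  have hx' : f x ∈ Ioi 0 := hpos x hx
  have hy' : f y ∈ Ioi 0 := hpos y hy
  have hcomb : 0 < a * f x + b * f y := (convex_Ioi 0) hx' hy' ha hb hab
  have hinv := (convexOn_zpow (𝕜 := 𝕜) (-1)).2 hx' hy' ha hb hab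
  simp only [zpow_neg, zpow_one, smul_eq_mul] at hinv ⊢
  calc (f (a • x + b • y))⁻¹ ≤ (a * f x + b * f y)⁻¹ :=
        inv_anti₀ hcomb (by simpa using hf.2 hx hy ha hb hab)
    _ ≤ a * (f x)⁻¹ + b * (f y)⁻¹ := hinv

lemma sqrt_mul_inv_sub_eq {t l : ℝ} (ht : 0 ≤ t) (hl : t < l) :
    √l * (t - l)⁻¹ = -((√l - √t)⁻¹ + (√l + √t)⁻¹) / 2 := by
  have hlt : √t < √l := Real.sqrt_lt_sqrt ht hl
  have hsub : t - l = -((√l - √t) * (√l + √t)) := by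
    linear_combination Real.sq_sqrt (ht.trans hl.le) - Real.sq_sqrt ht
  have hminus : √l - √t ≠ 0 := by linarith
  have hplus : √l + √t ≠ 0 := by linarith [Real.sqrt_nonneg t]
  rw [hsub]
  field_simp
  ring

lemma concaveOn_sqrt_mul_inv_sub {t : ℝ} (ht : 0 ≤ t) :
    ConcaveOn ℝ (Ioi t) fun l => √l * (t - l)⁻¹ := by
  have hsqrt : ConcaveOn ℝ (Ioi t) (√·) :=
    Real.strictConcaveOn_sqrt.concaveOn.subset (Ioi_subset_Ici ht) (convex_Ioi t)
  have hlt : ∀ l ∈ Ioi t, √t < √l := fun l hl => Real.sqrt_lt_sqrt ht hl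
  have hminus : ConvexOn ℝ (Ioi t) fun l => (√l - √t)⁻¹ := by
    refine ConcaveOn.convexOn_inv ?_ fun l hl => sub_pos.2 (hlt l hl)
    simpa only [Pi.add_def, ← sub_eq_add_neg] using hsqrt.add_const (-√t)
  have hplus : ConvexOn ℝ (Ioi t) fun l => (√l + √t)⁻¹ :=
    (hsqrt.add_const √t).convexOn_inv fun l hl =>
      show 0 < √l + √t by linarith [hlt l hl, Real.sqrt_nonneg t]
  refine ((hminus.add hplus).neg.smul (by norm_num : (0 : ℝ) ≤ 1 / 2)).congr fun l hl => ?_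
  simp only [Pi.neg_apply, Pi.add_apply, smul_eq_mul, sqrt_mul_inv_sub_eq ht hl]
  ring

lemma concaveOn_integral {α E : Type*} [MeasurableSpace α] [AddCommMonoid E] [Module ℝ E]
    {μ : Measure α} {s : Set E} {g : E → α → ℝ} (hs : Convex ℝ s)
    (hconc : ∀ᵐ t ∂μ, ConcaveOn ℝ s fun x => g x t) (hint : ∀ x ∈ s, Integrable (g x) μ) :
    ConcaveOn ℝ s fun x => ∫ t, g x t ∂μ := by
  refine ⟨hs, fun x hx y hy a b ha hb hab => ?_⟩
  have hxy := hs hx hy ha hb hab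
  simp only [smul_eq_mul]
  calc a * ∫ t, g x t ∂μ + b * ∫ t, g y t ∂μ = ∫ t, a * g x t + b * g y t ∂μ := by
        rw [integral_add ((hint x hx).const_mul a) ((hint y hy).const_mul b),
          integral_const_mul, integral_const_mul]
    _ ≤ ∫ t, g (a • x + b • y) t ∂μ :=
        integral_mono_ae (((hint x hx).const_mul a).add ((hint y hy).const_mul b)) (hint _ hxy)
          (hconc.mono fun t ht => by simpa using ht.2 hx hy ha hb hab)

lemma integrable_inv_sub_of_ae_le {μ : Measure ℝ} [IsFiniteMeasure μ] {a l : ℝ}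
    (h : ∀ᵐ t ∂μ, t ≤ a) (hl : a < l) : Integrable (fun t => (t - l)⁻¹) μ := by
  refine (integrable_const (l - a)⁻¹).mono' (measurable_id.sub_const l).inv.aestronglyMeasurable
    (h.mono fun t ht => ?_)
  rw [Real.norm_eq_abs, abs_inv, abs_sub_comm, abs_of_pos (by linarith)]
  exact inv_anti₀ (by linarith) (by linarith)

theorem stmt_4 (μ : Measure ℝ) [IsProbabilityMeasure μ] (lstar : ℝ)
    (hsupp : μ (Set.Icc 0 lstar)ᶜ = 0) :
    ConcaveOn ℝ (Set.Ioi lstar) (fun l : ℝ => Real.sqrt l * ∫ t, (t - l)⁻¹ ∂μ) := by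
  have hae : ∀ᵐ t ∂μ, t ∈ Icc 0 lstar := mem_ae_iff.2 hsupp
  simp_rw [← integral_const_mul]
  refine concaveOn_integral (convex_Ioi lstar) (hae.mono fun t ht => ?_) fun l hl => ?_
  · exact (concaveOn_sqrt_mul_inv_sub ht.1).subset (Ioi_subset_Ioi ht.2) (convex_Ioi lstar)
  · exact (integrable_inv_sub_of_ae_le (hae.mono fun t ht => ht.2) hl).const_mul _
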